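/- arXiv:2206.14157 — 4 statements merged into one kernel-verified Lean document; each statement's English description precedes it below -/
import Mathlib

section
/- Let n ≥ 1, let c : Fin n → ℝ be a value vector, let y : Fin n → ℝ satisfy y_i ≥ 0 for all i and Σ_i y_i = 1, and let 0 ≤ ε < 2. Let s be a permutation of Fin n with c_{s_1} ≤ c_{s_2} ≤ ⋯ ≤ c_{s_n}, and define the greedy output ỹ by ỹ_{s_n} = min(y_{s_n} + ε/2, 1) and, for 1 ≤ t < n, ỹ_{s_t} = max(0, y_{s_t} − max(0, ε/2 − Σ_{j<t} y_{s_j})). Then ỹ is a global maximizer of the gradient redirection problem: for every w : Fin n → ℝ with w_i ≥ 0 for all i, Σ_i w_i = 1, and Σ_i |w_i − y_i| ≤ ε, one has Σ_i c_i w_i ≤ Σ_i c_i ỹ_i. -/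
/-!
Reindex by `s` so that the values `C t = c (s t)` are nondecreasing. With `g x = max 0 (x - ε/2)`,
the greedy output telescopes to prefix sums `∑_{j<t} ỹ_j = g (∑_{j<t} y_j)`, while any feasible `w`
can move at most `ε/2` mass, so `∑_{j<t} w_j ≥ g (∑_{j<t} y_j)`. Thus `w - ỹ` has nonnegative prefix
sums and total `0`, and summation by parts against the nondecreasing `C` gives `⟨C, w - ỹ⟩ ≤ 0`.
-/

open Finset

section Telescoping

variable {ι G : Type*} [LinearOrder ι] [LocallyFiniteOrderBot ι] [AddCommGroup G]

theorem Finset.sum_Iio_sub_telescope (F : Finset ι → G) (t : ι) :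
    ∑ j ∈ Iio t, (F (Iic j) - F (Iio j)) = F (Iio t) - F ∅ := by
  induction hk : #(Iio t) using Nat.strong_induction_on generalizing t with
  | _ k ih =>
    rcases (Iio t).eq_empty_or_nonempty with h | h
    · simp [h]
    set p := (Iio t).max' h
    have hpt : p < t := mem_Iio.1 (max'_mem _ h)
    have hIio : Iio t = Iic p := by
      ext j
      simp only [mem_Iic]
      exact ⟨fun hj => le_max' _ _ hj, fun hj => mem_Iio.2 (hj.trans_lt hpt)⟩
    have hcard : #(Iio p) < k := hk ▸ card_lt_card (Iio_ssubset_Iio hpt)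
    rw [hIio, ← sum_Iio_add_eq_sum_Iic, ih _ hcard p rfl]
    abel

end Telescoping

section Rearrangement

variable {ι R : Type*} [LinearOrder ι] [Ring R] [LinearOrder R] [IsStrictOrderedRing R]
  {C d : ι → R}

theorem Finset.sum_mul_le_mul_sum_of_monotone (hC : Monotone C) (s : Finset ι)
    (hd : ∀ t ∈ s, ∑ j ∈ s with t ≤ j, d j ≤ 0) {b : R} (hb : ∀ i ∈ s, b ≤ C i) :
    ∑ i ∈ s, C i * d i ≤ b * ∑ i ∈ s, d i := by
  classical
  induction s using Finset.induction_on_min generalizing b with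
  | empty => simp
  | insert a s ha ih =>
    have has : a ∉ s := fun h => lt_irrefl a (ha a h)
    have hd_s : ∀ t ∈ s, ∑ j ∈ s with t ≤ j, d j ≤ 0 := fun t ht => by
      have := hd t (mem_insert_of_mem ht)
      rwa [filter_insert, if_neg (ha t ht).not_ge] at this
    have htotal : ∑ j ∈ insert a s, d j ≤ 0 := by
      have := hd a (mem_insert_self a s)
      rwa [filter_true_of_mem fun j hj => ?_] at this
      rcases mem_insert.1 hj with rfl | hj
      exacts [le_rfl, (ha j hj).le]
    calc ∑ i ∈ insert a s, C i * d i
        = C a * d a + ∑ i ∈ s, C i * d i := sum_insert has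
      _ ≤ C a * d a + C a * ∑ i ∈ s, d i := by
        gcongr
        exact ih hd_s fun i hi => hC (ha i hi).le
      _ = C a * ∑ i ∈ insert a s, d i := by rw [sum_insert has, mul_add]
      _ ≤ b * ∑ i ∈ insert a s, d i :=
        mul_le_mul_of_nonpos_right (hb a (mem_insert_self a s)) htotal

theorem sum_mul_nonpos_of_monotone [Fintype ι] [LocallyFiniteOrderBot ι] (hC : Monotone C)
    (hsum : ∑ i, d i = 0) (hpre : ∀ t, 0 ≤ ∑ i ∈ Iio t, d i) : ∑ i, C i * d i ≤ 0 := by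
  classical
  obtain ⟨b, hb⟩ := (Set.finite_range C).bddBelow
  have hsuffix : ∀ t ∈ (univ : Finset ι), ∑ j with t ≤ j, d j ≤ 0 := fun t _ => by
    have hIio : ({j | ¬t ≤ j} : Finset ι) = Iio t := by ext; simp
    have hsplit := sum_filter_add_sum_filter_not univ (t ≤ ·) d
    rw [hIio, hsum] at hsplit
    rw [eq_neg_of_add_eq_zero_left hsplit, neg_nonpos]
    exact hpre t
  simpa [hsum] using
    sum_mul_le_mul_sum_of_monotone hC univ hsuffix fun i _ => hb (Set.mem_range_self i)

end Rearrangement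

theorem two_nsmul_sum_sub_le_sum_abs_sub {ι G : Type*} [Fintype ι] [AddCommGroup G] [LinearOrder G]
    [IsOrderedAddMonoid G] {x y : ι → G} (h : ∑ i, x i = ∑ i, y i) (s : Finset ι) :
    2 • ∑ i ∈ s, (y i - x i) ≤ ∑ i, |x i - y i| := by
  have hpos (a : G) : 2 • a⁺ = |a| + a := by
    calc 2 • a⁺ = (a⁺ + a⁻) + (a⁺ - a⁻) := by abel
      _ = |a| + a := by rw [posPart_add_negPart, posPart_sub_negPart]
  have hle : ∑ i ∈ s, (y i - x i) ≤ ∑ i, (y i - x i)⁺ :=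
    (sum_le_sum fun i _ => le_posPart _).trans
      (sum_le_sum_of_subset_of_nonneg (subset_univ s) fun i _ _ => posPart_nonneg _)
  calc 2 • ∑ i ∈ s, (y i - x i)
      ≤ 2 • ∑ i, (y i - x i)⁺ := nsmul_le_nsmul_right hle 2
    _ = ∑ i, |x i - y i| := by
      simp_rw [smul_sum, hpos, sum_add_distrib, sum_sub_distrib, h, sub_self, add_zero, abs_sub_comm]

theorem max_zero_sub_max_zero_sub {a b : ℝ} (hb : 0 ≤ b) (δ : ℝ) :
    max 0 (b - max 0 (δ - a)) = max 0 (a + b - δ) - max 0 (a - δ) := by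
  simp only [max_def]
  split_ifs <;> linarith

section Greedy

variable {ι : Type*} [LinearOrder ι] [LocallyFiniteOrderBot ι] {Y T : ι → ℝ} {δ : ℝ} {last : ι}

theorem greedy_sum_Iio (hY : ∀ i, 0 ≤ Y i) (hδ : 0 ≤ δ) (hlast : IsMax last)
    (hT : ∀ t, t ≠ last → T t = max 0 (Y t - max 0 (δ - ∑ j ∈ Iio t, Y j))) (t : ι) :
    ∑ j ∈ Iio t, T j = max 0 (∑ j ∈ Iio t, Y j - δ) := by
  set g : Finset ι → ℝ := fun A => max 0 (∑ i ∈ A, Y i - δ)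
  have hstep : ∀ j ∈ Iio t, T j = g (Iic j) - g (Iio j) := fun j hj => by
    have hj_ne : j ≠ last := by
      rintro rfl
      exact hlast.not_lt (mem_Iio.1 hj)
    simp only [g]
    rw [hT j hj_ne, ← sum_Iio_add_eq_sum_Iic, max_zero_sub_max_zero_sub (hY j)]
  rw [sum_congr rfl hstep, sum_Iio_sub_telescope g t]
  simp [g, hδ]

theorem greedy_sum_eq_one [Fintype ι] (hY : ∀ i, 0 ≤ Y i) (hδ : 0 ≤ δ) (hlast : IsTop last)
    (hY1 : ∑ i, Y i = 1) (hT_last : T last = min (Y last + δ) 1)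
    (hT : ∀ t, t ≠ last → T t = max 0 (Y t - max 0 (δ - ∑ j ∈ Iio t, Y j))) :
    ∑ i, T i = 1 := by
  have huniv : Iic last = univ := eq_univ_of_forall fun i => mem_Iic.2 (hlast i)
  have hY_Iio : ∑ j ∈ Iio last, Y j = 1 - Y last := by
    rw [← hY1, ← huniv, ← sum_Iio_add_eq_sum_Iic, add_sub_cancel_right]
  rw [← huniv, ← sum_Iio_add_eq_sum_Iic, greedy_sum_Iio hY hδ hlast.isMax hT, hT_last, hY_Iio]
  simp only [max_def, min_def]
  split_ifs <;> linarith

end Greedy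

/-- **Optimality of the greedy gradient redirection algorithm (Algorithm 1).**
Given a value vector `c`, a probability vector `y`, a budget `0 ≤ ε < 2`, and a
permutation `s` sorting `c` in nondecreasing order, the greedy output `ty`
(with `ty (s last) = min (y (s last) + ε/2) 1` and
`ty (s t) = max 0 (y (s t) - max 0 (ε/2 - ∑_{j<t} y (s j)))` for `t < last`)
maximizes `⟨c, w⟩` over all probability vectors `w` with `‖w - y‖₁ ≤ ε`. -/
theorem greedy_gradient_redirection_optimal
    (n : ℕ) (hn : 1 ≤ n) (c y : Fin n → ℝ)
    (hy0 : ∀ i, 0 ≤ y i) (hy1 : ∑ i, y i = 1)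
    (ε : ℝ) (hε0 : 0 ≤ ε)
    (s : Equiv.Perm (Fin n))
    (hs : Monotone (fun t => c (s t)))
    (ty : Fin n → ℝ)
    (hty_last : ty (s ⟨n - 1, by omega⟩) = min (y (s ⟨n - 1, by omega⟩) + ε / 2) 1)
    (hty : ∀ t : Fin n, t ≠ ⟨n - 1, by omega⟩ →
      ty (s t) = max 0 (y (s t) - max 0 (ε / 2 - ∑ j ∈ Finset.Iio t, y (s j))))
    (w : Fin n → ℝ) (hw0 : ∀ i, 0 ≤ w i) (hw1 : ∑ i, w i = 1)
    (hwb : ∑ i, |w i - y i| ≤ ε) :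
    ∑ i, c i * w i ≤ ∑ i, c i * ty i := by
  have hlast : IsTop (⟨n - 1, by omega⟩ : Fin n) := fun t => Fin.mk_le_mk.2 (by omega)
  have hys : ∀ i, 0 ≤ y (s i) := fun i => hy0 (s i)
  have hδ : 0 ≤ ε / 2 := by positivity
  have hty1 : ∑ t, ty (s t) = 1 :=
    greedy_sum_eq_one hys hδ hlast ((Equiv.sum_comp s y).trans hy1) hty_last hty
  have hpre : ∀ t, ∑ j ∈ Iio t, ty (s j) ≤ ∑ j ∈ Iio t, w (s j) := fun t => by
    rw [greedy_sum_Iio hys hδ hlast.isMax hty]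
    have hmoved := two_nsmul_sum_sub_le_sum_abs_sub (x := w ∘ s) (y := y ∘ s)
      (by simp only [Function.comp_apply, Equiv.sum_comp s, hw1, hy1]) (Iio t)
    simp only [Function.comp_apply, Equiv.sum_comp s (fun i => |w i - y i|), sum_sub_distrib,
      two_nsmul] at hmoved
    exact max_le (sum_nonneg fun j _ => hw0 (s j)) (by linarith)
  rw [← Equiv.sum_comp s, ← Equiv.sum_comp s (fun i => c i * ty i), ← sub_nonpos, ← sum_sub_distrib]
  simp_rw [← mul_sub]
  refine sum_mul_nonpos_of_monotone hs ?_ fun t => ?_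
  · rw [sum_sub_distrib, Equiv.sum_comp s w, hw1, hty1, sub_self]
  · rw [sum_sub_distrib, sub_nonneg]
    exact hpre t
end

section
/- Let n ≥ 2, let c : Fin n → ℝ have pairwise distinct entries, and let s be the permutation of Fin n with c_{s_1} < c_{s_2} < ⋯ < c_{s_n}. Let y : Fin n → ℝ satisfy y_i ≥ 0 for all i and Σ_i y_i ≤ 1, set λ = 1 − Σ_i y_i, and let 0 ≤ ε < 2. If y* is an optimal solution of the modified gradient redirection problem (i.e., y* is feasible and Σ_i c_i w_i ≤ Σ_i c_i y*_i for every feasible w), then y*_{s_n} = min(y_{s_n} + ε/2, 1). -/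
private lemma sum_two_support {n : ℕ} (m j : Fin n) (hmj : m ≠ j) (g : Fin n → ℝ)
    (h : ∀ i, i ≠ m → i ≠ j → g i = 0) : ∑ i, g i = g m + g j := by
  rw [← Finset.sum_subset (Finset.subset_univ ({m, j} : Finset (Fin n)))
      (by
        intro x _ hx
        simp only [Finset.mem_insert, Finset.mem_singleton, not_or] at hx
        exact h x hx.1 hx.2)]
  exact Finset.sum_pair hmj

/-- **Lemma 1(a) (Greedy Choice Property).** For the modified gradient redirection
problem with slack `λ = 1 - ∑ i, y i`, any optimal solution `y*` satisfies
`y*_{sₙ} = min (y_{sₙ} + ε/2) 1`, where `sₙ` is the index of the strictly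
largest entry of `c`. -/
theorem greedy_choice_property_a
    (n : ℕ) (hn : 2 ≤ n) (c : Fin n → ℝ)
    (hc : Function.Injective c)
    (s : Equiv.Perm (Fin n))
    (hs : StrictMono (fun t => c (s t)))
    (y : Fin n → ℝ) (hy0 : ∀ i, 0 ≤ y i) (hy1 : ∑ i, y i ≤ 1)
    (ε : ℝ) (hε0 : 0 ≤ ε) (hε2 : ε < 2)
    (ystar : Fin n → ℝ)
    (hfeas : (∀ i, 0 ≤ ystar i) ∧ (∑ i, ystar i = 1) ∧
      (∑ i, |ystar i - y i|) + (1 - ∑ i, y i) ≤ ε)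
    (hopt : ∀ w : Fin n → ℝ, (∀ i, 0 ≤ w i) → (∑ i, w i = 1) →
      (∑ i, |w i - y i|) + (1 - ∑ i, y i) ≤ ε →
      ∑ i, c i * w i ≤ ∑ i, c i * ystar i) :
    ystar (s ⟨n - 1, by omega⟩) = min (y (s ⟨n - 1, by omega⟩) + ε / 2) 1 := by
  obtain ⟨h0, h1, hconstr⟩ := hfeas
  set m : Fin n := s ⟨n - 1, by omega⟩ with hm
  -- `c m` is the strict maximum of `c`
  have hmax : ∀ j, j ≠ m → c j < c m := by
    intro j hj
    have h1' : s.symm j ≠ ⟨n - 1, by omega⟩ := by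
      intro h
      exact hj (by rw [← Equiv.apply_symm_apply s j, h])
    have hlt : s.symm j < (⟨n - 1, by omega⟩ : Fin n) := by
      have hv := (s.symm j).isLt
      have hne : (s.symm j).val ≠ n - 1 := fun hh => h1' (Fin.ext hh)
      rw [Fin.lt_def]
      simp only []
      omega
    have := hs hlt
    simpa using this
  set lam : ℝ := 1 - ∑ i, y i with hlamdef
  have hlam : 0 ≤ lam := by simp only [hlamdef]; linarith
  -- the improvement move: shifting mass `δ` from `j` to `m` contradicts optimality
  have move : ∀ j : Fin n, j ≠ m → ∀ δ : ℝ, 0 < δ → δ ≤ ystar j →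
      |ystar m + δ - y m| + |ystar j - δ - y j|
        ≤ |ystar m - y m| + |ystar j - y j| + (ε - ((∑ i, |ystar i - y i|) + lam)) →
      False := by
    intro j hj δ hδ hδj hcon
    set w : Fin n → ℝ :=
      Function.update (Function.update ystar m (ystar m + δ)) j (ystar j - δ) with hw
    have hmj : m ≠ j := Ne.symm hj
    have hwm : w m = ystar m + δ := by
      simp [hw, Function.update_apply, hmj]
    have hwj : w j = ystar j - δ := by simp [hw]
    have hwo : ∀ i, i ≠ m → i ≠ j → w i = ystar i := by
      intro i him hij
      simp [hw, Function.update_apply, him, hij]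
    have hnonneg : ∀ i, 0 ≤ w i := by
      intro i
      by_cases him : i = m
      · subst him; rw [hwm]; linarith [h0 m]
      · by_cases hij : i = j
        · subst hij; rw [hwj]; linarith
        · rw [hwo i him hij]; exact h0 i
    have hsumw : ∑ i, w i = 1 := by
      have hsup := sum_two_support m j hmj (fun i => w i - ystar i)
        (fun i him hij => by simp only [hwo i him hij, sub_self])
      rw [Finset.sum_sub_distrib] at hsup
      simp only [hwm, hwj] at hsup
      linarith
    have habs : ∑ i, |w i - y i|
        = (∑ i, |ystar i - y i|) - |ystar m - y m| - |ystar j - y j|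
          + |ystar m + δ - y m| + |ystar j - δ - y j| := by
      have hsup := sum_two_support m j hmj (fun i => |w i - y i| - |ystar i - y i|)
        (fun i him hij => by simp only [hwo i him hij, sub_self])
      rw [Finset.sum_sub_distrib] at hsup
      simp only [hwm, hwj] at hsup
      linarith
    have hcw : ∑ i, c i * ystar i < ∑ i, c i * w i := by
      have hsup := sum_two_support m j hmj (fun i => c i * w i - c i * ystar i)
        (fun i him hij => by simp only [hwo i him hij, sub_self])
      rw [Finset.sum_sub_distrib] at hsup
      simp only [hwm, hwj] at hsup
      have hpos : 0 < δ * (c m - c j) := mul_pos hδ (by linarith [hmax j hj])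
      nlinarith
    have := hopt w hnonneg hsumw (by rw [habs]; linarith)
    linarith
  -- Step 1: at the optimum, `ystar j ≤ y j` for all `j ≠ m`.
  have step1 : ∀ j, j ≠ m → ystar j ≤ y j := by
    intro j hj
    by_contra hlt
    push_neg at hlt
    refine move j hj (ystar j - y j) (by linarith) (by linarith [hy0 j]) ?_
    have e1 : |ystar j - (ystar j - y j) - y j| = 0 := by
      rw [show ystar j - (ystar j - y j) - y j = 0 by ring, abs_zero]
    have h2 : |ystar m + (ystar j - y j) - y m| ≤ |ystar m - y m| + (ystar j - y j) := by
      rw [show ystar m + (ystar j - y j) - y m = (ystar m - y m) + (ystar j - y j) by ring]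
      have := abs_add_le (ystar m - y m) (ystar j - y j)
      rw [abs_of_nonneg (by linarith : (0:ℝ) ≤ ystar j - y j)] at this
      exact this
    have h3 : |ystar j - y j| = ystar j - y j := abs_of_nonneg (by linarith)
    linarith
  -- Step 2: compute the ℓ¹ distance at the optimum.
  have hysum : ∑ i ∈ Finset.univ.erase m, ystar i = 1 - ystar m := by
    have := Finset.sum_erase_add Finset.univ ystar (Finset.mem_univ m)
    linarith
  have hyysum : ∑ i ∈ Finset.univ.erase m, y i = (∑ i, y i) - y m := by
    have := Finset.sum_erase_add Finset.univ y (Finset.mem_univ m)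
    linarith
  have hA : ∑ i ∈ Finset.univ.erase m, (y i - ystar i) = ystar m - y m - lam := by
    rw [Finset.sum_sub_distrib, hysum, hyysum, hlamdef]; ring
  have hA0 : 0 ≤ ∑ i ∈ Finset.univ.erase m, (y i - ystar i) :=
    Finset.sum_nonneg fun i hi => by
      have := step1 i (Finset.ne_of_mem_erase hi); linarith
  have hge : y m + lam ≤ ystar m := by linarith [hA ▸ hA0]
  have habs_eq : ∑ i, |ystar i - y i| = 2 * (ystar m - y m) - lam := by
    have hsplit := Finset.sum_erase_add Finset.univ (fun i => |ystar i - y i|)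
      (Finset.mem_univ m)
    have herase : ∑ i ∈ Finset.univ.erase m, |ystar i - y i|
        = ∑ i ∈ Finset.univ.erase m, (y i - ystar i) :=
      Finset.sum_congr rfl fun i hi => by
        rw [abs_of_nonpos (by linarith [step1 i (Finset.ne_of_mem_erase hi)])]; ring
    have hm0 : |ystar m - y m| = ystar m - y m := abs_of_nonneg (by linarith)
    rw [← hsplit, herase, hA]
    show ystar m - y m - lam + |ystar m - y m| = 2 * (ystar m - y m) - lam
    rw [hm0]; ring
  have hub : ystar m ≤ y m + ε / 2 := by
    rw [habs_eq] at hconstr; linarith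
  have hub1 : ystar m ≤ 1 := by
    have := Finset.single_le_sum (f := ystar) (fun i _ => h0 i) (Finset.mem_univ m)
    linarith
  -- Step 3: the greedy value is attained.
  have hle : ystar m ≤ min (y m + ε / 2) 1 := le_min hub hub1
  rcases eq_or_lt_of_le hle with h | h
  · exact h
  · exfalso
    have h1' : ystar m < 1 := lt_of_lt_of_le h (min_le_right _ _)
    have h2' : ystar m < y m + ε / 2 := lt_of_lt_of_le h (min_le_left _ _)
    obtain ⟨j, hj, hjpos⟩ : ∃ j, j ≠ m ∧ 0 < ystar j := by
      by_contra hall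
      push_neg at hall
      have : ∑ i ∈ Finset.univ.erase m, ystar i ≤ 0 :=
        Finset.sum_nonpos fun i hi => hall i (Finset.ne_of_mem_erase hi)
      linarith
    set δ : ℝ := min (ystar j) (y m + ε / 2 - ystar m) with hδdef
    have hδpos : 0 < δ := lt_min hjpos (by linarith)
    have hδle : δ ≤ ystar j := min_le_left _ _
    have hδ2 : δ ≤ y m + ε / 2 - ystar m := min_le_right _ _
    refine move j hj δ hδpos hδle ?_
    have e1 : |ystar m + δ - y m| = ystar m - y m + δ := by
      rw [abs_of_nonneg (by linarith)]; ring
    have e2 : |ystar j - δ - y j| = y j - ystar j + δ := by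
      rw [abs_of_nonpos (by linarith [step1 j hj])]; ring
    have e3 : |ystar m - y m| = ystar m - y m := abs_of_nonneg (by linarith)
    have e4 : |ystar j - y j| = y j - ystar j := by
      rw [abs_of_nonpos (by linarith [step1 j hj])]; ring
    rw [e1, e2, e3, e4, habs_eq]
    linarith
end

section
/- Let n ≥ 2, let c : Fin n → ℝ have pairwise distinct entries, and let s be the permutation of Fin n with c_{s_1} < c_{s_2} < ⋯ < c_{s_n}. Let y : Fin n → ℝ satisfy y_i ≥ 0 for all i and Σ_i y_i ≤ 1, set λ = 1 − Σ_i y_i, and let 0 ≤ ε < 2. If y* is an optimal solution of the modified gradient redirection problem, then y*_{s_1} = max(y_{s_1} − (ε/2 − λ), 0). -/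
/-- **Lemma 1(b) (Greedy Choice Property).** For the modified gradient redirection
problem with slack `λ = 1 - ∑ i, y i`, any optimal solution `y*` satisfies
`y*_{s₁} = max (y_{s₁} - (ε/2 - λ)) 0`, where `s₁` is the index of the strictly
smallest entry of `c`. -/
theorem greedy_choice_property_b
    (n : ℕ) (hn : 2 ≤ n) (c : Fin n → ℝ)
    (hc : Function.Injective c)
    (s : Equiv.Perm (Fin n))
    (hs : StrictMono (fun t => c (s t)))
    (y : Fin n → ℝ) (hy0 : ∀ i, 0 ≤ y i) (hy1 : ∑ i, y i ≤ 1)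
    (ε : ℝ) (hε0 : 0 ≤ ε) (hε2 : ε < 2)
    (ystar : Fin n → ℝ)
    (hfeas : (∀ i, 0 ≤ ystar i) ∧ (∑ i, ystar i = 1) ∧
      (∑ i, |ystar i - y i|) + (1 - ∑ i, y i) ≤ ε)
    (hopt : ∀ w : Fin n → ℝ, (∀ i, 0 ≤ w i) → (∑ i, w i = 1) →
      (∑ i, |w i - y i|) + (1 - ∑ i, y i) ≤ ε →
      ∑ i, c i * w i ≤ ∑ i, c i * ystar i) :
    ystar (s ⟨0, by omega⟩) =
      max (y (s ⟨0, by omega⟩) - (ε / 2 - (1 - ∑ i, y i))) 0 := by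
  obtain ⟨hys0, hys1, hysb⟩ := hfeas
  set i₀ : Fin n := s ⟨0, by omega⟩ with hi₀def
  show ystar i₀ = max (y i₀ - (ε / 2 - (1 - ∑ i, y i))) 0
  -- i₀ is the strict minimizer of c
  have hmin : ∀ j, j ≠ i₀ → c i₀ < c j := by
    intro j hj
    have hk : s.symm j ≠ ⟨0, by omega⟩ := by
      intro h
      apply hj
      rw [← s.apply_symm_apply j, h]
    have hlt : (⟨0, by omega⟩ : Fin n) < s.symm j := by
      rcases Fin.lt_or_lt_of_ne hk with h | h
      · exact absurd h (by simp [Fin.lt_def])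
      · exact h
    have := hs hlt
    simpa using this
  -- key exchange lemma
  have key : ∀ j, j ≠ i₀ → ∀ t : ℝ, 0 ≤ t → t ≤ ystar i₀ →
      |ystar i₀ - t - y i₀| + |ystar j + t - y j| + ((∑ i, |ystar i - y i|) + (1 - ∑ i, y i))
        ≤ ε + |ystar i₀ - y i₀| + |ystar j - y j| → t ≤ 0 := by
    intro j hj t ht0 ht1 hb
    set w : Fin n → ℝ := fun i => if i = i₀ then ystar i₀ - t else if i = j then ystar j + t else ystar i with hwdef
    have hiw : w i₀ = ystar i₀ - t := by simp [hwdef]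
    have hjw : w j = ystar j + t := by simp [hwdef, hj]
    have hrest : ∀ i ∈ (Finset.univ.erase i₀).erase j, w i = ystar i := by
      intro i hi
      have hij : i ≠ j := (Finset.mem_erase.mp hi).1
      have hii : i ≠ i₀ := (Finset.mem_erase.mp (Finset.mem_erase.mp hi).2).1
      simp [hwdef, hij, hii]
    have hsumsplit : ∀ f : Fin n → ℝ,
        ∑ i, f i = ∑ i ∈ (Finset.univ.erase i₀).erase j, f i + f j + f i₀ := by
      intro f
      rw [Finset.sum_erase_add _ _ (Finset.mem_erase_of_ne_of_mem hj (Finset.mem_univ j)),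
        Finset.sum_erase_add _ _ (Finset.mem_univ i₀)]
    have hw0 : ∀ i, 0 ≤ w i := by
      intro i
      rcases eq_or_ne i i₀ with h | h
      · rw [h, hiw]; linarith [hys0 i₀]
      · rcases eq_or_ne i j with h2 | h2
        · rw [h2, hjw]; linarith [hys0 j]
        · simp only [hwdef, if_neg h, if_neg h2]; exact hys0 i
    have hreq : ∀ g : ℝ → ℝ → ℝ,
        ∑ i ∈ (Finset.univ.erase i₀).erase j, g (w i) (y i)
          = ∑ i ∈ (Finset.univ.erase i₀).erase j, g (ystar i) (y i) := by
      intro g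
      exact Finset.sum_congr rfl fun i hi => by rw [hrest i hi]
    have hwsum : ∑ i, w i = 1 := by
      have h1 := hsumsplit w
      have h2 := hsumsplit ystar
      have h3 : ∑ i ∈ (Finset.univ.erase i₀).erase j, w i
          = ∑ i ∈ (Finset.univ.erase i₀).erase j, ystar i :=
        Finset.sum_congr rfl fun i hi => hrest i hi
      rw [h1, h3, hiw, hjw]
      rw [h2] at hys1
      linarith
    have hwb : (∑ i, |w i - y i|) + (1 - ∑ i, y i) ≤ ε := by
      have h1 := hsumsplit (fun i => |w i - y i|)
      have h2 := hsumsplit (fun i => |ystar i - y i|)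
      have h3 : ∑ i ∈ (Finset.univ.erase i₀).erase j, |w i - y i|
          = ∑ i ∈ (Finset.univ.erase i₀).erase j, |ystar i - y i| :=
        Finset.sum_congr rfl fun i hi => by rw [hrest i hi]
      simp only [hiw, hjw] at h1
      rw [h1, h3]
      rw [h2] at hb
      linarith
    have hval := hopt w hw0 hwsum hwb
    have h1 := hsumsplit (fun i => c i * w i)
    have h2 := hsumsplit (fun i => c i * ystar i)
    have h3 : ∑ i ∈ (Finset.univ.erase i₀).erase j, c i * w i
        = ∑ i ∈ (Finset.univ.erase i₀).erase j, c i * ystar i :=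
      Finset.sum_congr rfl fun i hi => by rw [hrest i hi]
    simp only [hiw, hjw] at h1
    rw [h1, h3, h2] at hval
    have hcj := hmin j hj
    nlinarith
  -- N and its bounds
  set N : ℝ := ∑ i, max (y i - ystar i) 0 with hNdef
  have habs : ∀ a b : ℝ, |a - b| = (a - b) + 2 * max (b - a) 0 := by
    intro a b
    rcases le_total a b with h | h
    · rw [abs_of_nonpos (by linarith), max_eq_left (by linarith)]; ring
    · rw [abs_of_nonneg (by linarith), max_eq_right (by linarith)]; ring
  have hNsum : ∑ i, |ystar i - y i| = (1 - ∑ i, y i) + 2 * N := by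
    rw [Finset.sum_congr rfl (fun i _ => habs (ystar i) (y i)), Finset.sum_add_distrib,
      Finset.sum_sub_distrib, ← Finset.mul_sum, hys1, hNdef]
  have hN0 : 0 ≤ N := Finset.sum_nonneg fun i _ => le_max_right _ _
  have hNle : N ≤ ε / 2 - (1 - ∑ i, y i) := by
    rw [hNsum] at hysb; linarith
  have hterm : ∀ i, max (y i - ystar i) 0 ≤ N :=
    fun i => Finset.single_le_sum (fun i _ => le_max_right (y i - ystar i) 0) (Finset.mem_univ i)
  have hlow : max (y i₀ - (ε / 2 - (1 - ∑ i, y i))) 0 ≤ ystar i₀ := by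
    apply max_le
    · have h1 := hterm i₀
      have h2 := le_max_left (y i₀ - ystar i₀) 0
      linarith
    · exact hys0 i₀
  by_contra hne
  have hgt : max (y i₀ - (ε / 2 - (1 - ∑ i, y i))) 0 < ystar i₀ :=
    lt_of_le_of_ne hlow (fun h => hne h.symm)
  have hg0 : 0 < ystar i₀ := lt_of_le_of_lt (le_max_right _ 0) hgt
  by_cases hex : ∃ j, j ≠ i₀ ∧ ystar j < y j
  · -- Case 1: some other coordinate was decreased
    obtain ⟨j, hj, hjlt⟩ := hex
    set t : ℝ := min (ystar i₀) (y j - ystar j) with htdef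
    have ht0 : 0 < t := lt_min hg0 (by linarith)
    have ht1 : t ≤ ystar i₀ := min_le_left _ _
    have ht2 : t ≤ y j - ystar j := min_le_right _ _
    have hb : |ystar i₀ - t - y i₀| + |ystar j + t - y j| + ((∑ i, |ystar i - y i|) + (1 - ∑ i, y i))
        ≤ ε + |ystar i₀ - y i₀| + |ystar j - y j| := by
      have e1 : |ystar j + t - y j| = |ystar j - y j| - t := by
        rw [abs_of_nonpos (by linarith), abs_of_nonpos (by linarith)]; ring
      have e2 : |ystar i₀ - t - y i₀| ≤ |ystar i₀ - y i₀| + t := by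
        rcases abs_cases (ystar i₀ - y i₀) with ⟨h, _⟩ | ⟨h, _⟩ <;>
          rcases abs_cases (ystar i₀ - t - y i₀) with ⟨h', _⟩ | ⟨h', _⟩ <;> linarith
      linarith
    linarith [key j hj t ht0.le ht1 hb]
  · push_neg at hex
    -- pick j = s 1
    set j : Fin n := s ⟨1, by omega⟩ with hjdef
    have hcj : c i₀ < c j := hs (show (⟨0, by omega⟩ : Fin n) < ⟨1, by omega⟩ by simp [Fin.lt_def])
    have hj : j ≠ i₀ := fun h => by rw [h] at hcj; exact lt_irrefl _ hcj
    have hjy : y j ≤ ystar j := hex j hj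
    by_cases hgt2 : y i₀ < ystar i₀
    · -- Case 2a: i₀ itself was increased
      set t : ℝ := ystar i₀ - y i₀ with htdef
      have ht0 : 0 < t := by simp [htdef]; linarith
      have ht1 : t ≤ ystar i₀ := by have := hy0 i₀; simp [htdef]; linarith
      have hb : |ystar i₀ - t - y i₀| + |ystar j + t - y j| + ((∑ i, |ystar i - y i|) + (1 - ∑ i, y i))
          ≤ ε + |ystar i₀ - y i₀| + |ystar j - y j| := by
        have e1 : |ystar i₀ - t - y i₀| = 0 := by rw [htdef]; simp
        have e2 : |ystar i₀ - y i₀| = t := by rw [abs_of_nonneg (by linarith)]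
        have e3 : |ystar j + t - y j| = |ystar j - y j| + t := by
          rw [abs_of_nonneg (by linarith), abs_of_nonneg (by linarith)]; ring
        linarith
      linarith [key j hj t ht0.le ht1 hb]
    · -- Case 2b: budget has slack
      push_neg at hgt2
      have hNeq : N = y i₀ - ystar i₀ := by
        rw [hNdef, ← Finset.sum_erase_add _ _ (Finset.mem_univ i₀)]
        have hz : ∑ i ∈ Finset.univ.erase i₀, max (y i - ystar i) 0 = 0 := by
          apply Finset.sum_eq_zero
          intro i hi
          have := hex i (Finset.mem_erase.mp hi).1
          exact max_eq_right (by linarith)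
        rw [hz, max_eq_left (by linarith)]; ring
      have hTlow : y i₀ - (ε / 2 - (1 - ∑ i, y i)) < ystar i₀ :=
        lt_of_le_of_lt (le_max_left _ _) hgt
      have hslack : (∑ i, |ystar i - y i|) + (1 - ∑ i, y i) < ε := by
        rw [hNsum, hNeq]; linarith
      set t : ℝ := min (ystar i₀) ((ε - ((∑ i, |ystar i - y i|) + (1 - ∑ i, y i))) / 2) with htdef
      have ht0 : 0 < t := lt_min hg0 (by linarith)
      have ht1 : t ≤ ystar i₀ := min_le_left _ _
      have ht2 : t ≤ (ε - ((∑ i, |ystar i - y i|) + (1 - ∑ i, y i))) / 2 := min_le_right _ _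
      have hb : |ystar i₀ - t - y i₀| + |ystar j + t - y j| + ((∑ i, |ystar i - y i|) + (1 - ∑ i, y i))
          ≤ ε + |ystar i₀ - y i₀| + |ystar j - y j| := by
        have e1 : |ystar i₀ - t - y i₀| ≤ |ystar i₀ - y i₀| + t := by
          rcases abs_cases (ystar i₀ - y i₀) with ⟨h, _⟩ | ⟨h, _⟩ <;>
            rcases abs_cases (ystar i₀ - t - y i₀) with ⟨h', _⟩ | ⟨h', _⟩ <;> linarith
        have e2 : |ystar j + t - y j| ≤ |ystar j - y j| + t := by
          rcases abs_cases (ystar j - y j) with ⟨h, _⟩ | ⟨h, _⟩ <;>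
            rcases abs_cases (ystar j + t - y j) with ⟨h', _⟩ | ⟨h', _⟩ <;> linarith
        linarith
      linarith [key j hj t ht0.le ht1 hb]
end

section
/- Let n ≥ 1, let y : Fin n → ℝ satisfy y_i ≥ 0 for all i and Σ_i y_i ≤ 1, set λ = 1 − Σ_i y_i, and let ε ≥ 0. For any w : Fin n → ℝ with w_i ≥ 0 for all i and Σ_i w_i = 1, the budget constraint Σ_i |w_i − y_i| + λ ≤ ε holds if and only if Σ_i max(w_i − y_i, 0) ≤ ε/2. -/
/-- **Budget reformulation.** For a probability vector `w` and a nonnegative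
subprobability vector `y` with slack `λ = 1 - ∑ i, y i`, the budget constraint
`‖w - y‖₁ + λ ≤ ε` holds iff the total added mass `∑ i, (w i - y i)⁺` is at
most `ε/2`. -/
theorem budget_iff_added_mass
    (n : ℕ) (hn : 1 ≤ n) (y : Fin n → ℝ)
    (hy0 : ∀ i, 0 ≤ y i) (hy1 : ∑ i, y i ≤ 1)
    (ε : ℝ) (hε0 : 0 ≤ ε)
    (w : Fin n → ℝ) (hw0 : ∀ i, 0 ≤ w i) (hw1 : ∑ i, w i = 1) :
    (∑ i, |w i - y i|) + (1 - ∑ i, y i) ≤ ε ↔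
      ∑ i, max (w i - y i) 0 ≤ ε / 2 := by
  have key : ∑ i, |w i - y i| = 2 * (∑ i, max (w i - y i) 0) - (1 - ∑ i, y i) := by
    have h : ∀ i : Fin n, |w i - y i| = 2 * max (w i - y i) 0 - (w i - y i) := by
      intro i
      rcases le_total (w i - y i) 0 with h | h
      · rw [abs_of_nonpos h, max_eq_right h]; ring
      · rw [abs_of_nonneg h, max_eq_left h]; ring
    rw [Finset.sum_congr rfl fun i _ => h i, Finset.sum_sub_distrib,
      Finset.sum_sub_distrib, hw1, ← Finset.mul_sum]
  rw [key]
  constructor <;> intro h <;> linarith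
end
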